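/- arXiv:1107.3679 — 2 statements merged into one kernel-verified Lean document; each statement's English description precedes it below -/
import Mathlib

section
/- Let T^{αβ} be a constant symmetric quadratic form on ℝ^4 satisfying the null condition: T^{αβ} ξ_α ξ_β = 0 whenever ξ_0² = Σ_a ξ_a². Then there is a constant C such that for all (t, x) in the interior cone Λ' = {|x| ≤ t − 1}, the one-frame component T̲^{00} := T^{αβ} Ψ_α^0 Ψ_β^0 = T^{00} − Σ_a (x^a/t)(T^{a0} + T^{0a}) + Σ_{a,b} (x^a/t)(x^b/t) T^{ab} satisfies |T̲^{00}| ≤ C·max_{α,β}|T^{αβ}|·(t² − |x|²)/t². -/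
/-!
Splitting `ξ = (s, v)`, the form reads `T₀₀ s² + s·L(v) + S(v)` with `L` linear and `S` quadratic.
Adding and subtracting the values at the two null vectors `(±|v|, v)` gives `S(v) = -T₀₀ |v|²` and
`L = 0`: the form is `T₀₀` times the Minkowski form. The one-frame component is its value at
`(1, -x/t)`, namely `T₀₀ (1 - |x|²/t²)`, and `1 - |x|²/t²` is the decay factor.
-/

open Finset

namespace NullForm

variable {n : ℕ} (T : Fin (n + 1) → Fin (n + 1) → ℝ)

def quadForm (ξ : Fin (n + 1) → ℝ) : ℝ := ∑ α, ∑ β, T α β * ξ α * ξ β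

def NullCondition : Prop :=
  ∀ ξ : Fin (n + 1) → ℝ, ξ 0 ^ 2 = ∑ a : Fin n, ξ a.succ ^ 2 → quadForm T ξ = 0

def mixedPart (v : Fin n → ℝ) : ℝ := ∑ a, v a * (T a.succ 0 + T 0 a.succ)

def spatialPart (v : Fin n → ℝ) : ℝ := ∑ a, ∑ b, v a * v b * T a.succ b.succ

lemma quadForm_cons (s : ℝ) (v : Fin n → ℝ) :
    quadForm T (Fin.cons s v) = T 0 0 * s ^ 2 + s * mixedPart T v + spatialPart T v := by
  simp only [quadForm, mixedPart, spatialPart, Fin.sum_univ_succ, Fin.cons_zero, Fin.cons_succ,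
    mul_sum, mul_add, sum_add_distrib]
  ring_nf
  simp only [mul_comm, mul_left_comm, mul_assoc, add_assoc]

variable {T}

lemma spatialPart_add_eq_zero_and_mul_mixedPart_eq_zero (hT : NullCondition T) {s : ℝ}
    {v : Fin n → ℝ} (hs : s ^ 2 = ∑ a, v a ^ 2) :
    T 0 0 * s ^ 2 + spatialPart T v = 0 ∧ s * mixedPart T v = 0 := by
  have hplus := hT (Fin.cons s v) (by simpa using hs)
  have hminus := hT (Fin.cons (-s) v) (by simpa using hs)
  rw [quadForm_cons] at hplus hminus
  exact ⟨by linear_combination (hplus + hminus) / 2, by linear_combination (hplus - hminus) / 2⟩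

lemma sq_sqrt_sum_sq (v : Fin n → ℝ) : √(∑ a, v a ^ 2) ^ 2 = ∑ a, v a ^ 2 :=
  Real.sq_sqrt (sum_nonneg fun _ _ => sq_nonneg _)

lemma spatialPart_eq_of_null (hT : NullCondition T) (v : Fin n → ℝ) :
    spatialPart T v = -T 0 0 * ∑ a, v a ^ 2 := by
  have hs := sq_sqrt_sum_sq v
  linear_combination (spatialPart_add_eq_zero_and_mul_mixedPart_eq_zero hT hs).1 - T 0 0 * hs

lemma mixedPart_eq_zero_of_null (hT : NullCondition T) (v : Fin n → ℝ) : mixedPart T v = 0 := by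
  rcases mul_eq_zero.1 (spatialPart_add_eq_zero_and_mul_mixedPart_eq_zero hT
    (sq_sqrt_sum_sq v)).2 with hnorm | hmixed
  · have hv : ∀ a, v a = 0 := by
      intro a
      rw [Real.sqrt_eq_zero (sum_nonneg fun _ _ => sq_nonneg _),
        sum_eq_zero_iff_of_nonneg fun _ _ => sq_nonneg _] at hnorm
      exact pow_eq_zero_iff two_ne_zero |>.1 (hnorm a (mem_univ a))
    simp [mixedPart, hv]
  · exact hmixed

lemma oneFrame_eq_of_null (hT : NullCondition T) (x : Fin n → ℝ) {t : ℝ} (ht : t ≠ 0) :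
    T 0 0 - mixedPart T (fun a => x a / t) + spatialPart T (fun a => x a / t) =
      T 0 0 * ((t ^ 2 - ∑ a, x a ^ 2) / t ^ 2) := by
  rw [mixedPart_eq_zero_of_null hT, spatialPart_eq_of_null hT]
  simp only [div_pow, ← sum_div]
  field_simp
  ring

end NullForm

theorem null_form_decay_general (T : Fin 4 → Fin 4 → ℝ)
    (hnull : ∀ ξ : Fin 4 → ℝ, (ξ 0) ^ 2 = ∑ a : Fin 3, (ξ a.succ) ^ 2 →
      ∑ α : Fin 4, ∑ β : Fin 4, T α β * ξ α * ξ β = 0) :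
    ∃ C : ℝ, ∀ (t : ℝ) (x : Fin 3 → ℝ),
      Real.sqrt (∑ a : Fin 3, (x a) ^ 2) ≤ t - 1 →
      |T 0 0 - (∑ a : Fin 3, (x a / t) * (T a.succ 0 + T 0 a.succ))
          + ∑ a : Fin 3, ∑ b : Fin 3, (x a / t) * (x b / t) * T a.succ b.succ|
        ≤ C * (⨆ q : Fin 4 × Fin 4, |T q.1 q.2|)
            * (t ^ 2 - ∑ a : Fin 3, (x a) ^ 2) / t ^ 2 := by
  refine ⟨1, fun t x hx => ?_⟩
  have ht : 1 ≤ t := by linarith [(Real.sqrt_nonneg _).trans hx]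
  have hxt : ∑ a, x a ^ 2 ≤ t ^ 2 := (Real.sqrt_le_iff.1 (hx.trans (by linarith))).2
  have hdecay : 0 ≤ (t ^ 2 - ∑ a, x a ^ 2) / t ^ 2 := div_nonneg (by linarith) (sq_nonneg t)
  have hmax : |T 0 0| ≤ ⨆ q : Fin 4 × Fin 4, |T q.1 q.2| :=
    le_ciSup (f := fun q : Fin 4 × Fin 4 => |T q.1 q.2|) (Set.finite_range _).bddAbove (0, 0)
  change |T 0 0 - NullForm.mixedPart T (fun a => x a / t)
    + NullForm.spatialPart T (fun a => x a / t)| ≤ _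
  rw [NullForm.oneFrame_eq_of_null hnull x (zero_lt_one.trans_le ht).ne', abs_mul,
    abs_of_nonneg hdecay, one_mul, mul_div_assoc]
  exact mul_le_mul_of_nonneg_right hmax hdecay

/-- A constant symmetric quadratic form satisfying the Minkowski null condition
has one-frame `(0,0)`-component bounded by `C · max|T| · (t² − |x|²)/t²` in the
interior cone `Λ' = {|x| ≤ t − 1}`. -/
theorem null_form_decay (T : Fin 4 → Fin 4 → ℝ)
    (hsymm : ∀ α β, T α β = T β α)
    (hnull : ∀ ξ : Fin 4 → ℝ, (ξ 0) ^ 2 = ∑ a : Fin 3, (ξ a.succ) ^ 2 →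
      ∑ α : Fin 4, ∑ β : Fin 4, T α β * ξ α * ξ β = 0) :
    ∃ C : ℝ, ∀ (t : ℝ) (x : Fin 3 → ℝ),
      Real.sqrt (∑ a : Fin 3, (x a) ^ 2) ≤ t - 1 →
      |T 0 0 - (∑ a : Fin 3, (x a / t) * (T a.succ 0 + T 0 a.succ))
          + ∑ a : Fin 3, ∑ b : Fin 3, (x a / t) * (x b / t) * T a.succ b.succ|
        ≤ C * (⨆ q : Fin 4 × Fin 4, |T q.1 q.2|)
            * (t ^ 2 - ∑ a : Fin 3, (x a) ^ 2) / t ^ 2 :=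
  null_form_decay_general T hnull
end

section
/- Let u be smooth on ℝ^{1+3} supported in Λ' = {|x| ≤ t−1}, with t > 0. Then the pointwise bound holds: (s/t)² |∂_t ∂_t u| ≤ |□u| + 2 Σ_{a,β} |∂̄_a ∂_β u| + C t^{-1} Σ_β |∂_β u| on Λ', where s² = t² − |x|² and C is a universal constant. -/
/-- Partial derivative in direction `α` on `ℝ^{1+3}` (coordinate 0 is time). -/
noncomputable def pd (α : Fin 4) (u : (Fin 4 → ℝ) → ℝ) : (Fin 4 → ℝ) → ℝ :=
  fun p => fderiv ℝ u p (Pi.single α 1)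

/-- Hyperboloidal derivative `∂̄_a = (x^a/t)∂_t + ∂_a`. -/
noncomputable def dbar (a : Fin 3) (u : (Fin 4 → ℝ) → ℝ) : (Fin 4 → ℝ) → ℝ :=
  fun p => (p a.succ / p 0) * pd 0 u p + pd a.succ u p

/-- The d'Alembertian `□ = ∂_t² − Δ`. -/
noncomputable def box (u : (Fin 4 → ℝ) → ℝ) : (Fin 4 → ℝ) → ℝ :=
  fun p => pd 0 (pd 0 u) p - ∑ a : Fin 3, pd a.succ (pd a.succ u) p

lemma pd_pd {u : (Fin 4 → ℝ) → ℝ} (hu : ContDiff ℝ (⊤ : ℕ∞) u) (β α : Fin 4) (p : Fin 4 → ℝ) :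
    pd β (pd α u) p = fderiv ℝ (fderiv ℝ u) p (Pi.single β 1) (Pi.single α 1) := by
  have hdiff : DifferentiableAt ℝ (fderiv ℝ u) p :=
    ((hu.fderiv_right (m := 1) (by exact WithTop.coe_le_coe.2 le_top)).differentiable one_ne_zero).differentiableAt
  have h : pd α u = fun q => (fderiv ℝ u q) (Pi.single α 1) := rfl
  rw [pd, h, fderiv_clm_apply (c := fderiv ℝ u) (u := fun _ => Pi.single α 1) hdiff
    (differentiableAt_const _)]
  simp

lemma pd_symm {u : (Fin 4 → ℝ) → ℝ} (hu : ContDiff ℝ (⊤ : ℕ∞) u) (β α : Fin 4) (p : Fin 4 → ℝ) :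
    pd β (pd α u) p = pd α (pd β u) p := by
  rw [pd_pd hu, pd_pd hu]
  exact hu.contDiffAt.isSymmSndFDerivAt (by rw [minSmoothness_of_isRCLikeNormedField]; exact WithTop.coe_le_coe.2 le_top) _ _

/-- Pointwise control of the "bad" second-order derivative:
`(s/t)² |∂_t∂_t u| ≤ |□u| + 2 Σ_{a,β} |∂̄_a ∂_β u| + C t⁻¹ Σ_β |∂_β u|` on
`Λ' = {|x| ≤ t − 1}`, with `s² = t² − |x|²`. -/
theorem bad_second_derivative_bound :
    ∃ C > (0 : ℝ), ∀ u : (Fin 4 → ℝ) → ℝ, ContDiff ℝ (⊤ : ℕ∞) u →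
      (∀ p : Fin 4 → ℝ,
        ¬ Real.sqrt (∑ a : Fin 3, (p a.succ) ^ 2) ≤ p 0 - 1 → u p = 0) →
      ∀ p : Fin 4 → ℝ, Real.sqrt (∑ a : Fin 3, (p a.succ) ^ 2) ≤ p 0 - 1 →
        (((p 0) ^ 2 - ∑ a : Fin 3, (p a.succ) ^ 2) / (p 0) ^ 2) * |pd 0 (pd 0 u) p|
          ≤ |box u p| + 2 * (∑ a : Fin 3, ∑ β : Fin 4, |dbar a (pd β u) p|)
            + C * (p 0)⁻¹ * ∑ β : Fin 4, |pd β u p| := by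
  refine ⟨1, one_pos, ?_⟩
  intro u hu _ p hp
  have hr := Real.sqrt_nonneg (∑ a : Fin 3, (p a.succ) ^ 2)
  have ht1 : (1 : ℝ) ≤ p 0 := by linarith
  have ht0 : (0 : ℝ) < p 0 := by linarith
  have hrsq : ∑ a : Fin 3, (p a.succ) ^ 2 ≤ (p 0 - 1) ^ 2 := by
    have := Real.sqrt_le_sqrt hp
    calc ∑ a : Fin 3, (p a.succ) ^ 2
        = Real.sqrt (∑ a : Fin 3, (p a.succ) ^ 2) ^ 2 := by
          rw [Real.sq_sqrt]; positivity
      _ ≤ (p 0 - 1) ^ 2 := by nlinarith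
  have hxa : ∀ a : Fin 3, |p a.succ| ≤ p 0 := by
    intro a
    have h1 : (p a.succ) ^ 2 ≤ ∑ b : Fin 3, (p b.succ) ^ 2 :=
      Finset.single_le_sum (f := fun b : Fin 3 => (p b.succ) ^ 2)
        (fun _ _ => by positivity) (Finset.mem_univ a)
    nlinarith [abs_nonneg (p a.succ), sq_abs (p a.succ)]
  -- key algebraic identity
  have key : ((p 0) ^ 2 - ∑ a : Fin 3, (p a.succ) ^ 2) / (p 0) ^ 2 * pd 0 (pd 0 u) p
      = box u p + ∑ a : Fin 3,
          (dbar a (pd a.succ u) p - (p a.succ / p 0) * dbar a (pd 0 u) p) := by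
    simp only [box, dbar, Fin.sum_univ_three]
    rw [pd_symm hu 0 (0:Fin 3).succ, pd_symm hu 0 (1:Fin 3).succ, pd_symm hu 0 (2:Fin 3).succ]
    field_simp
    ring
  have hcoe : (0:ℝ) ≤ ((p 0) ^ 2 - ∑ a : Fin 3, (p a.succ) ^ 2) / (p 0) ^ 2 := by
    apply div_nonneg _ (by positivity)
    nlinarith
  have habs : ((p 0) ^ 2 - ∑ a : Fin 3, (p a.succ) ^ 2) / (p 0) ^ 2 * |pd 0 (pd 0 u) p|
      = |box u p + ∑ a : Fin 3,
          (dbar a (pd a.succ u) p - (p a.succ / p 0) * dbar a (pd 0 u) p)| := by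
    rw [← key, abs_mul, abs_of_nonneg hcoe]
  have hterm : ∀ a : Fin 3,
      |dbar a (pd a.succ u) p - (p a.succ / p 0) * dbar a (pd 0 u) p|
        ≤ ∑ β : Fin 4, |dbar a (pd β u) p| := by
    intro a
    have hc : |p a.succ / p 0| ≤ 1 := by
      rw [abs_div, abs_of_pos ht0, div_le_one ht0]; exact hxa a
    have h1 : |dbar a (pd a.succ u) p - (p a.succ / p 0) * dbar a (pd 0 u) p|
        ≤ |dbar a (pd a.succ u) p| + |dbar a (pd 0 u) p| := by
      calc _ ≤ |dbar a (pd a.succ u) p| + |(p a.succ / p 0) * dbar a (pd 0 u) p| :=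
            abs_sub _ _
        _ ≤ _ := by
            rw [abs_mul]
            nlinarith [abs_nonneg (dbar a (pd 0 u) p)]
    refine h1.trans ?_
    rw [← Finset.add_sum_erase _ _ (Finset.mem_univ (0 : Fin 4))]
    have hmem : a.succ ∈ Finset.univ.erase (0 : Fin 4) :=
      Finset.mem_erase.2 ⟨Fin.succ_ne_zero a, Finset.mem_univ _⟩
    have h2 := Finset.single_le_sum (f := fun β : Fin 4 => |dbar a (pd β u) p|)
      (fun _ _ => abs_nonneg _) hmem
    linarith
  have hsum : |box u p + ∑ a : Fin 3,
        (dbar a (pd a.succ u) p - (p a.succ / p 0) * dbar a (pd 0 u) p)|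
      ≤ |box u p| + ∑ a : Fin 3, ∑ β : Fin 4, |dbar a (pd β u) p| := by
    calc _ ≤ |box u p| + |∑ a : Fin 3,
          (dbar a (pd a.succ u) p - (p a.succ / p 0) * dbar a (pd 0 u) p)| := abs_add_le _ _
      _ ≤ |box u p| + ∑ a : Fin 3,
          |dbar a (pd a.succ u) p - (p a.succ / p 0) * dbar a (pd 0 u) p| := by
          gcongr; exact Finset.abs_sum_le_sum_abs _ _
      _ ≤ _ := by gcongr with a _; exact hterm a
  have hnn1 : (0:ℝ) ≤ ∑ a : Fin 3, ∑ β : Fin 4, |dbar a (pd β u) p| :=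
    Finset.sum_nonneg fun _ _ => Finset.sum_nonneg fun _ _ => abs_nonneg _
  have hnn2 : (0:ℝ) ≤ 1 * (p 0)⁻¹ * ∑ β : Fin 4, |pd β u p| := by
    have : (0:ℝ) ≤ ∑ β : Fin 4, |pd β u p| := Finset.sum_nonneg fun _ _ => abs_nonneg _
    positivity
  rw [habs]
  linarith [hsum]
end
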